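/- Let q : V → W and r : V → W be linear maps of finite-dimensional ℂ-vector spaces with dim V = dim W, and assume the Laurent-polynomial determinant det(q − t·r) is nonzero. If both the degree-0 coefficient condition (det q ≠ 0 follows from q being an isomorphism) and the top coefficient condition hold — i.e., q and r are isomorphisms — then the cokernel of q ⊗ 1 − t·(r ⊗ 1) : V ⊗ ℂ[t,t⁻¹] → W ⊗ ℂ[t,t⁻¹] is a torsion ℂ[t,t⁻¹]-module of finite dimension over ℂ equal to dim V. -/

import Mathlib

/-!
Put `u = A B⁻¹`. Since `(A - t B) (B⁻¹ w) = u w - t w` for constant vectors `w`, multiplication by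
`t` acts on the classes of constant vectors in the cokernel as `u` does, so every class is that of a
constant vector. Conversely, evaluating `t ↦ u` gives a map `ℂ[t,t⁻¹]ⁿ → ℂⁿ` that kills the image of
`A - t B` and is the identity on constants; hence the cokernel is `ℂⁿ`. It is torsion because
`det (A - t B)` is nonzero (its constant term is `det A`) and, via the adjugate, annihilates it.
-/

open LaurentPolynomial Matrix

noncomputable def RestrictScalars.linearEquiv (R S M : Type*) [CommSemiring R] [Semiring S]
    [Algebra R S] [AddCommMonoid M] [Module S M] [Module R M] [IsScalarTower R S M] :
    RestrictScalars R S M ≃ₗ[R] M :=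
  { RestrictScalars.addEquiv R S M with
    map_smul' c x := (RestrictScalars.addEquiv_map_smul R S M c x).trans (algebraMap_smul S c _) }

theorem LinearMap.isUnit_toMatrix_of_bijective {K V W ι : Type*} [CommRing K] [AddCommGroup V]
    [Module K V] [AddCommGroup W] [Module K W] [Fintype ι] [DecidableEq ι]
    (bV : Module.Basis ι K V) (bW : Module.Basis ι K W) {f : V →ₗ[K] W}
    (hf : Function.Bijective f) : IsUnit (LinearMap.toMatrix bV bW f) := by
  let e := LinearEquiv.ofBijective f hf
  refine (Matrix.isUnit_iff_isUnit_det _).mpr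
    (Matrix.isUnit_det_of_right_inverse (B := LinearMap.toMatrix bW bV e.symm) ?_)
  rw [← LinearMap.toMatrix_comp, ← LinearMap.toMatrix_id bW]
  exact congrArg _ (LinearMap.ext e.apply_symm_apply)

theorem Matrix.isTorsion_quotient_range_mulVecLin {S ι : Type*} [CommRing S] [Fintype ι]
    [DecidableEq ι] (M : Matrix ι ι S) (hM : M.det ∈ nonZeroDivisors S) :
    Module.IsTorsion S ((ι → S) ⧸ LinearMap.range M.mulVecLin) := by
  intro x
  obtain ⟨v, rfl⟩ := Submodule.Quotient.mk_surjective _ x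
  refine ⟨⟨M.det, hM⟩, ?_⟩
  rw [Submonoid.mk_smul, ← Submodule.Quotient.mk_smul, Submodule.Quotient.mk_eq_zero]
  exact ⟨M.adjugate *ᵥ v, by
    rw [mulVecLin_apply, mulVec_mulVec, mul_adjugate, smul_mulVec, one_mulVec]⟩

namespace LaurentPolynomial

section aevalUnit

variable {R A : Type*} [CommSemiring R] [Semiring A] [Algebra R A]

noncomputable def aevalUnit (u : Aˣ) : R[T;T⁻¹] →ₐ[R] A :=
  AddMonoidAlgebra.lift R A ℤ ((Units.coeHom A).comp (zpowersHom Aˣ u))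

@[simp]
theorem aevalUnit_C (u : Aˣ) (a : R) : aevalUnit u (C a) = algebraMap R A a := by
  rw [C_eq_algebraMap, AlgHom.commutes]

@[simp]
theorem aevalUnit_T (u : Aˣ) (k : ℤ) : aevalUnit u (T k : R[T;T⁻¹]) = ↑(u ^ k) := by
  rw [T, aevalUnit, AddMonoidAlgebra.lift_single, one_smul]
  rfl

end aevalUnit

variable {R : Type*} [CommRing R] {ι : Type*}

variable (R ι) in
noncomputable def vecC : (ι → R) →ₗ[R] (ι → R[T;T⁻¹]) :=
  (Algebra.linearMap R R[T;T⁻¹]).compLeft ι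

@[simp]
theorem vecC_apply (w : ι → R) (j : ι) : vecC R ι w j = C (w j) := rfl

variable [Fintype ι]

noncomputable def pencil (A B : Matrix ι ι R) : Matrix ι ι R[T;T⁻¹] :=
  A.map (C (R := R)) - (T 1 : R[T;T⁻¹]) • B.map (C (R := R))

theorem pencil_mulVec_vecC (A B : Matrix ι ι R) (w : ι → R) :
    pencil A B *ᵥ vecC R ι w = vecC R ι (A *ᵥ w) - (T 1 : R[T;T⁻¹]) • vecC R ι (B *ᵥ w) := by
  ext i
  simp [pencil, mulVec, dotProduct, sub_mul, Finset.mul_sum, mul_assoc]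

variable [DecidableEq ι]

theorem span_range_vecC : Submodule.span R[T;T⁻¹] (Set.range (vecC R ι)) = ⊤ := by
  refine top_le_iff.mp ((Pi.basisFun R[T;T⁻¹] ι).span_eq.symm.trans_le (Submodule.span_mono ?_))
  rintro _ ⟨j, rfl⟩
  refine ⟨Pi.single j 1, ?_⟩
  ext i
  simp [Pi.single_apply, apply_ite C]

/-- The map `R[T;T⁻¹]^ι → R^ι` fixing the standard basis and semilinear along `T ↦ u`
(`vecAevalUnit_smul`): it identifies the cokernel of `A - T • B` with `R^ι` when `u = A B⁻¹`. -/
noncomputable def vecAevalUnit (u : (Matrix ι ι R)ˣ) : (ι → R[T;T⁻¹]) →ₗ[R] (ι → R) where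
  toFun v := ∑ j, aevalUnit u (v j) *ᵥ Pi.single j 1
  map_add' v w := by simp only [Pi.add_apply, map_add, add_mulVec, Finset.sum_add_distrib]
  map_smul' a v := by simp only [Pi.smul_apply, map_smul, smul_mulVec, Finset.smul_sum,
    RingHom.id_apply]

theorem vecAevalUnit_vecC (u : (Matrix ι ι R)ˣ) (w : ι → R) :
    vecAevalUnit u (vecC R ι w) = w := by
  simp only [vecAevalUnit, LinearMap.coe_mk, AddHom.coe_mk, vecC_apply, aevalUnit_C,
    Algebra.algebraMap_eq_smul_one, smul_mulVec, one_mulVec]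
  exact (pi_eq_sum_univ' w).symm

theorem vecAevalUnit_smul (u : (Matrix ι ι R)ˣ) (p : R[T;T⁻¹]) (v : ι → R[T;T⁻¹]) :
    vecAevalUnit u (p • v) = aevalUnit u p *ᵥ vecAevalUnit u v := by
  simp only [vecAevalUnit, LinearMap.coe_mk, AddHom.coe_mk, Pi.smul_apply, smul_eq_mul, map_mul,
    ← mulVec_mulVec, mulVec_sum]

theorem smul_apply_eq_of_T_smul_apply {M : Type*} [AddCommGroup M] [Module R[T;T⁻¹] M]
    [Module R M] [IsScalarTower R R[T;T⁻¹] M] (u : (Matrix ι ι R)ˣ) (f : (ι → R) →ₗ[R] M)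
    (hf : ∀ w, (T 1 : R[T;T⁻¹]) • f w = f (↑u *ᵥ w)) (p : R[T;T⁻¹]) (w : ι → R) :
    p • f w = f (aevalUnit u p *ᵥ w) := by
  have hT (k : ℤ) (w : ι → R) : (T k : R[T;T⁻¹]) • f w = f (↑(u ^ k) *ᵥ w) := by
    induction k using Int.induction_on generalizing w with
    | zero => rw [T_zero, one_smul, zpow_zero, Units.val_one, one_mulVec]
    | succ k ih =>
      rw [T_add, mul_smul, hf, ih, mulVec_mulVec, ← Units.val_mul, ← _root_.zpow_add_one]
    | pred k ih =>
      calc (T (-k - 1) : R[T;T⁻¹]) • f w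
          = (T (-k - 1) : R[T;T⁻¹]) • (T 1 : R[T;T⁻¹]) • f (↑u⁻¹ *ᵥ w) := by
            rw [hf, mulVec_mulVec, Units.mul_inv, one_mulVec]
        _ = (T (-k) : R[T;T⁻¹]) • f (↑u⁻¹ *ᵥ w) := by rw [← mul_smul, ← T_add, sub_add_cancel]
        _ = f (↑(u ^ (-(k : ℤ) - 1)) *ᵥ w) := by
            rw [ih, mulVec_mulVec, ← Units.val_mul, ← _root_.zpow_sub_one]
  induction p using LaurentPolynomial.induction_on' with
  | add p q hp hq => rw [add_smul, hp, hq, map_add, add_mulVec, map_add]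
  | C_mul_T k c =>
    rw [mul_smul, hT, C_eq_algebraMap, algebraMap_smul, map_mul, aevalUnit_T, AlgHom.commutes,
      Algebra.algebraMap_eq_smul_one, smul_mul_assoc, one_mul, smul_mulVec, map_smul]

section Cokernel

variable (a b : (Matrix ι ι R)ˣ)

theorem vecAevalUnit_pencil_mulVec (x : ι → R[T;T⁻¹]) :
    vecAevalUnit (a * b⁻¹) (pencil a b *ᵥ x) = 0 := by
  have hx : x ∈ Submodule.span R[T;T⁻¹] (Set.range (vecC R ι)) := by
    rw [span_range_vecC]; trivial
  induction hx using Submodule.span_induction with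
  | mem _ hw =>
    obtain ⟨w, rfl⟩ := hw
    rw [pencil_mulVec_vecC, map_sub, vecAevalUnit_smul, vecAevalUnit_vecC, vecAevalUnit_vecC,
      aevalUnit_T, zpow_one, mulVec_mulVec, Units.val_mul, mul_assoc, Units.inv_mul, mul_one,
      sub_self]
  | zero => rw [mulVec_zero, map_zero]
  | add x y _ _ hx hy => rw [mulVec_add, map_add, hx, hy, add_zero]
  | smul p x _ hx => rw [mulVec_smul, vecAevalUnit_smul, hx, mulVec_zero]

theorem T_smul_mkQ_vecC (w : ι → R) :
    (T 1 : R[T;T⁻¹]) • (pencil a b).mulVecLin.range.mkQ (vecC R ι w) =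
      (pencil a b).mulVecLin.range.mkQ (vecC R ι (↑(a * b⁻¹) *ᵥ w)) := by
  rw [← map_smul, Submodule.mkQ_apply, Submodule.mkQ_apply, eq_comm, Submodule.Quotient.eq]
  refine ⟨vecC R ι (↑b⁻¹ *ᵥ w), ?_⟩
  rw [mulVecLin_apply, pencil_mulVec_vecC, mulVec_mulVec, mulVec_mulVec, Units.mul_inv,
    one_mulVec, Units.val_mul]

theorem smul_mkQ_vecC (p : R[T;T⁻¹]) (w : ι → R) :
    p • (pencil a b).mulVecLin.range.mkQ (vecC R ι w) =
      (pencil a b).mulVecLin.range.mkQ (vecC R ι (aevalUnit (a * b⁻¹) p *ᵥ w)) := by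
  have h := smul_apply_eq_of_T_smul_apply (a * b⁻¹)
    ((pencil a b).mulVecLin.range.mkQ.restrictScalars R ∘ₗ vecC R ι)
    (fun w => by exact T_smul_mkQ_vecC a b w) p w
  exact h

theorem mkQ_vecC_vecAevalUnit (v : ι → R[T;T⁻¹]) :
    (pencil a b).mulVecLin.range.mkQ (vecC R ι (vecAevalUnit (a * b⁻¹) v)) =
      (pencil a b).mulVecLin.range.mkQ v := by
  have hv : v ∈ Submodule.span R[T;T⁻¹] (Set.range (vecC R ι)) := by
    rw [span_range_vecC]; trivial
  induction hv using Submodule.span_induction with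
  | mem _ hw =>
    obtain ⟨w, rfl⟩ := hw
    rw [vecAevalUnit_vecC]
  | zero => rw [map_zero, map_zero, map_zero]
  | add x y _ _ hx hy => rw [map_add, map_add, map_add, hx, hy, map_add]
  | smul p x _ hx => rw [vecAevalUnit_smul, ← smul_mkQ_vecC, hx, map_smul]

theorem ker_vecAevalUnit :
    LinearMap.ker (vecAevalUnit (a * b⁻¹)) = (pencil a b).mulVecLin.range.restrictScalars R := by
  ext v
  rw [LinearMap.mem_ker, Submodule.restrictScalars_mem]
  constructor
  · intro hv
    rw [← Submodule.Quotient.mk_eq_zero, ← Submodule.mkQ_apply, ← mkQ_vecC_vecAevalUnit, hv,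
      map_zero, map_zero]
  · rintro ⟨x, rfl⟩
    exact vecAevalUnit_pencil_mulVec a b x

noncomputable def cokernelPencilEquiv :
    ((ι → R[T;T⁻¹]) ⧸ (pencil a b).mulVecLin.range) ≃ₗ[R] (ι → R) :=
  (Submodule.Quotient.restrictScalarsEquiv R _).symm ≪≫ₗ
    Submodule.quotEquivOfEq _ _ (ker_vecAevalUnit a b).symm ≪≫ₗ
    (vecAevalUnit (a * b⁻¹)).quotKerEquivOfSurjective
      fun w => ⟨vecC R ι w, vecAevalUnit_vecC _ w⟩

end Cokernel

theorem det_pencil_ne_zero {A : Matrix ι ι R} (hA : A.det ≠ 0) (B : Matrix ι ι R) :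
    (pencil A B).det ≠ 0 := by
  set P : Matrix ι ι (Polynomial R) :=
    A.map Polynomial.C + (Polynomial.X : Polynomial R) • (-B).map Polynomial.C
  have hP : pencil A B = P.map Polynomial.toLaurent := by
    refine Matrix.ext fun i j => ?_
    simp [pencil, P, sub_eq_add_neg]
  have hP0 : P.det.eval 0 = A.det := by
    rw [eval_det_add_X_smul, ← RingHom.mapMatrix_apply, ← RingHom.map_det, Polynomial.eval_C]
  rw [hP, ← RingHom.mapMatrix_apply, ← RingHom.map_det, Polynomial.toLaurent_ne_zero]
  rintro h0
  exact hA (by rw [← hP0, h0, Polynomial.eval_zero])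

end LaurentPolynomial

/-- Let `q, r : V → W` be linear isomorphisms of finite-dimensional complex vector spaces of
the same dimension `n`, with matrices `A`, `B` in chosen bases. Then the cokernel of
`q ⊗ 1 − t·(r ⊗ 1)`, i.e. of the matrix `A − t·B` acting on `ℂ[t,t⁻¹]ⁿ`, is a torsion
`ℂ[t,t⁻¹]`-module which is finite-dimensional over `ℂ` of dimension `n = dim V`. -/
theorem stmt_17 {V W : Type*} [AddCommGroup V] [Module ℂ V] [AddCommGroup W] [Module ℂ W]
    {n : ℕ} (bV : Module.Basis (Fin n) ℂ V) (bW : Module.Basis (Fin n) ℂ W)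
    (q r : V →ₗ[ℂ] W) (hq : Function.Bijective q) (hr : Function.Bijective r) :
    Module.IsTorsion (LaurentPolynomial ℂ)
      ((Fin n → LaurentPolynomial ℂ) ⧸ LinearMap.range
        (((LinearMap.toMatrix bV bW q).map (LaurentPolynomial.C (R := ℂ)) -
          (LaurentPolynomial.T (R := ℂ) 1) •
            (LinearMap.toMatrix bV bW r).map (LaurentPolynomial.C (R := ℂ))).mulVecLin)) ∧
    Module.Finite ℂ (RestrictScalars ℂ (LaurentPolynomial ℂ)
      ((Fin n → LaurentPolynomial ℂ) ⧸ LinearMap.range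
        (((LinearMap.toMatrix bV bW q).map (LaurentPolynomial.C (R := ℂ)) -
          (LaurentPolynomial.T (R := ℂ) 1) •
            (LinearMap.toMatrix bV bW r).map (LaurentPolynomial.C (R := ℂ))).mulVecLin))) ∧
    Module.finrank ℂ (RestrictScalars ℂ (LaurentPolynomial ℂ)
      ((Fin n → LaurentPolynomial ℂ) ⧸ LinearMap.range
        (((LinearMap.toMatrix bV bW q).map (LaurentPolynomial.C (R := ℂ)) -
          (LaurentPolynomial.T (R := ℂ) 1) •
            (LinearMap.toMatrix bV bW r).map (LaurentPolynomial.C (R := ℂ))).mulVecLin))) =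
      Module.finrank ℂ V := by
  obtain ⟨a, ha⟩ := LinearMap.isUnit_toMatrix_of_bijective bV bW hq
  obtain ⟨b, hb⟩ := LinearMap.isUnit_toMatrix_of_bijective bV bW hr
  rw [← ha, ← hb]
  have hdet : (pencil (a : Matrix (Fin n) (Fin n) ℂ) b).det ≠ 0 :=
    det_pencil_ne_zero ((Matrix.isUnit_iff_isUnit_det _).mp a.isUnit).ne_zero _
  let e := (RestrictScalars.linearEquiv ℂ ℂ[T;T⁻¹] _).trans (cokernelPencilEquiv a b)
  refine ⟨Matrix.isTorsion_quotient_range_mulVecLin _ (mem_nonZeroDivisors_of_ne_zero hdet),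
    Module.Finite.equiv e.symm, ?_⟩
  rw [Module.finrank_eq_card_basis bV, ← Module.finrank_fintype_fun_eq_card ℂ]
  exact e.finrank_eq
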